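/- arXiv:2205.11068 — 3 statements merged into one kernel-verified Lean document; each statement's English description precedes it below -/
import Mathlib

section
/- Let ABCD be a cyclic quadrilateral with angles alpha, beta, gamma, delta at A, B, C, D respectively, where alpha < beta < gamma, alpha < delta < gamma, alpha + gamma = pi, beta + delta = pi, and side lengths a = AB, b = BC, c = CD, d = DA with a >= d. Then a >= d > b and a > c. -/
open EuclideanGeometry

theorem stmt_6 (A B C D : EuclideanSpace ℝ (Fin 2))
    (hcyc : EuclideanGeometry.Cospherical ({A, B, C, D} : Set (EuclideanSpace ℝ (Fin 2))))
    (α β γ δ a b c d : ℝ)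
    (hα : α = ∠ D A B) (hβ : β = ∠ A B C) (hγ : γ = ∠ B C D) (hδ : δ = ∠ C D A)
    (h1 : α < β) (h2 : β < γ) (h3 : α < δ) (h4 : δ < γ)
    (h5 : α + γ = Real.pi) (h6 : β + δ = Real.pi)
    (ha : a = dist A B) (hb : b = dist B C) (hc : c = dist C D) (hd : d = dist D A)
    (had : d ≤ a) :
    b < d ∧ c < a := by
  -- side positivity
  have ha0 : 0 < a := by
    rw [ha, dist_pos]
    intro h
    rw [h] at hα hβ
    rw [EuclideanGeometry.angle_self_right] at hα
    rw [EuclideanGeometry.angle_self_left] at hβ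
    rw [hα, hβ] at h1; exact lt_irrefl _ h1
  have hb0 : 0 < b := by
    rw [hb, dist_pos]
    intro h
    rw [h] at hβ hγ
    rw [EuclideanGeometry.angle_self_right] at hβ
    rw [EuclideanGeometry.angle_self_left] at hγ
    rw [hβ, hγ] at h2; exact lt_irrefl _ h2
  have hc0 : 0 < c := by
    rw [hc, dist_pos]
    intro h
    rw [h] at hγ hδ
    rw [EuclideanGeometry.angle_self_right] at hγ
    rw [EuclideanGeometry.angle_self_left] at hδ
    rw [hγ, hδ] at h4; exact lt_irrefl _ h4
  have hd0 : 0 < d := by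
    rw [hd, dist_pos]
    intro h
    rw [h] at hδ hα
    rw [EuclideanGeometry.angle_self_right] at hδ
    rw [EuclideanGeometry.angle_self_left] at hα
    rw [hα, hδ] at h3; exact lt_irrefl _ h3
  -- angle ranges
  have hα0 : 0 ≤ α := hα ▸ EuclideanGeometry.angle_nonneg _ _ _
  have hβ0 : 0 ≤ β := hβ ▸ EuclideanGeometry.angle_nonneg _ _ _
  have hβpi : β ≤ Real.pi := hβ ▸ EuclideanGeometry.angle_le_pi _ _ _
  have hαγ : α < γ := h1.trans h2
  have hαhalf : α < Real.pi / 2 := by linarith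
  set x := Real.cos α with hxdef
  set y := Real.cos β with hydef
  have hx : 0 < x := Real.cos_pos_of_mem_Ioo ⟨by linarith [Real.pi_pos], hαhalf⟩
  have hx1 : x ≤ 1 := Real.cos_le_one α
  have hyx : y < x := Real.cos_lt_cos_of_nonneg_of_le_pi hα0 hβpi h1
  have hxy : -x < y := by
    have hstep : Real.cos (Real.pi - β) < x :=
      Real.cos_lt_cos_of_nonneg_of_le_pi hα0 (by linarith) (by linarith)
    rw [Real.cos_pi_sub] at hstep
    linarith
  have hcγ : Real.cos γ = -x := by
    have h : γ = Real.pi - α := by linarith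
    rw [h, Real.cos_pi_sub]
  have hcδ : Real.cos δ = -y := by
    have h : δ = Real.pi - β := by linarith
    rw [h, Real.cos_pi_sub]
  -- law of cosines, diagonal BD
  have lc1 := EuclideanGeometry.law_cos B A D
  rw [dist_comm B A, EuclideanGeometry.angle_comm B A D, ← ha, ← hd, ← hα] at lc1
  have lc2 := EuclideanGeometry.law_cos B C D
  rw [dist_comm D C, ← hb, ← hc, ← hγ, hcγ] at lc2
  have e1 : 2*(a*d+b*c)*x = a^2+d^2-b^2-c^2 := by linear_combination lc1 - lc2
  -- law of cosines, diagonal AC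
  have lc3 := EuclideanGeometry.law_cos A B C
  rw [dist_comm C B, ← ha, ← hb, ← hβ] at lc3
  have lc4 := EuclideanGeometry.law_cos A D C
  rw [dist_comm A D, EuclideanGeometry.angle_comm A D C, ← hd, ← hc, ← hδ, hcδ] at lc4
  have e2 : 2*(a*b+c*d)*y = a^2+b^2-c^2-d^2 := by linear_combination lc3 - lc4
  -- quadrilateral inequalities
  have hq1 : a ≤ b + c + d := by
    have t : dist A B ≤ dist D A + (dist C D + dist B C) := by
      calc dist A B ≤ dist A D + dist D B := dist_triangle A D B
        _ ≤ dist A D + (dist D C + dist C B) := by linarith [dist_triangle D C B]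
        _ = dist D A + (dist C D + dist B C) := by
            rw [dist_comm A D, dist_comm D C, dist_comm C B]
    rw [ha, hb, hc, hd]; linarith
  have hq2 : d ≤ a + b + c := by
    have t : dist D A ≤ dist C D + (dist B C + dist A B) := by
      calc dist D A ≤ dist D C + dist C A := dist_triangle D C A
        _ ≤ dist D C + (dist C B + dist B A) := by linarith [dist_triangle C B A]
        _ = dist C D + (dist B C + dist A B) := by
            rw [dist_comm D C, dist_comm C B, dist_comm B A]
    rw [ha, hb, hc, hd]; linarith
  -- main argument
  have hca : c < a := by
    by_contra hac
    push_neg at hac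
    rcases le_or_gt d b with hbd | hbd
    · have p1 : a*a ≤ c*c := mul_self_le_mul_self ha0.le hac
      have p2 : d*d ≤ b*b := mul_self_le_mul_self hd0.le hbd
      have p3 : 0 < 2*(a*d+b*c)*x := mul_pos (by positivity) hx
      linarith only [e1, p1, p2, p3]
    · have key : 2*(a*b+c*d)*(x+y) = 2*(a^2-c^2) + 2*((a-c)*(b-d))*x := by
        linear_combination e1 + e2
      have h7 : 0 ≤ (a-c)*(b-d) := by
        have h := mul_nonneg (show (0:ℝ) ≤ c-a by linarith) (show (0:ℝ) ≤ d-b by linarith)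
        linarith only [h]
      have h8 := mul_le_mul_of_nonneg_left hx1 (show (0:ℝ) ≤ 2*((a-c)*(b-d)) by linarith)
      rw [mul_one] at h8
      have h10 : 2*(a^2-c^2) + 2*((a-c)*(b-d)) = 2*((a-c)*(a+c+b-d)) := by ring
      have h9 : (a-c)*(a+c+b-d) ≤ 0 := by
        have h := mul_nonneg (show (0:ℝ) ≤ c-a by linarith) (show (0:ℝ) ≤ a+c+b-d by linarith)
        linarith only [h]
      have hpos : 0 < 2*(a*b+c*d)*(x+y) :=
        mul_pos (by positivity) (by linarith)
      linarith only [key, h8, h9, h10, hpos]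
  have hbd' : b < d := by
    by_contra hdb
    push_neg at hdb
    have key2 : 2*(a*b+c*d)*(y-x) = 2*(b^2-d^2) - 2*((a-c)*(b-d))*x := by
      linear_combination e2 - e1
    have h7 : 0 ≤ (a-c)*(b-d) := mul_nonneg (by linarith) (by linarith)
    have h8 := mul_le_mul_of_nonneg_left hx1 (show (0:ℝ) ≤ 2*((a-c)*(b-d)) by linarith)
    rw [mul_one] at h8
    have h10 : 2*(b^2-d^2) - 2*((a-c)*(b-d)) = 2*((b-d)*(b+d+c-a)) := by ring
    have h9 : 0 ≤ (b-d)*(b+d+c-a) := mul_nonneg (by linarith) (by linarith)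
    have hneg : 2*(a*b+c*d)*(y-x) < 0 :=
      mul_neg_of_pos_of_neg (by positivity) (by linarith)
    linarith only [key2, h8, h9, h10, hneg]
  exact ⟨hbd', hca⟩
end

section
/- Let ABCD be a cyclic quadrilateral with angles alpha, beta, gamma, delta at A, B, C, D, sides a = AB, b = BC, c = CD, d = DA. If c >= d, then beta < 2*alpha. -/
open EuclideanGeometry

set_option maxHeartbeats 1000000 in
theorem stmt_7 (A B C D : EuclideanSpace ℝ (Fin 2))
    (hcyc : EuclideanGeometry.Cospherical ({A, B, C, D} : Set (EuclideanSpace ℝ (Fin 2))))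
    (α β γ δ a b c d : ℝ)
    (hα : α = ∠ D A B) (hβ : β = ∠ A B C) (hγ : γ = ∠ B C D) (hδ : δ = ∠ C D A)
    (hs1 : α ≤ β) (hs2 : α ≤ γ) (hs3 : α ≤ δ)
    (h5 : α + γ = Real.pi) (h6 : β + δ = Real.pi)
    (ha : a = dist A B) (hb : b = dist B C) (hc : c = dist C D) (hd : d = dist D A)
    (hcd : d ≤ c) :
    β < 2 * α := by
  have hπ := Real.pi_pos
  have hα0 : 0 ≤ α := by rw [hα]; exact EuclideanGeometry.angle_nonneg D A B
  have hβπ : β ≤ Real.pi := by rw [hβ]; exact EuclideanGeometry.angle_le_pi A B C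
  by_cases hcase : Real.pi / 3 < α
  · -- β = π - δ ≤ π - α < 2α since 3α > π
    linarith
  push_neg at hcase
  -- distinctness
  have hAB : A ≠ B := by
    intro h
    have : α = Real.pi / 2 := by rw [hα, h, angle_self_right]
    linarith
  have hAD : A ≠ D := by
    intro h
    have : α = Real.pi / 2 := by rw [hα, ← h, angle_self_left]
    linarith
  have hBC : B ≠ C := by
    intro h
    have : γ = Real.pi / 2 := by rw [hγ, h, angle_self_left]
    linarith
  have hCD : C ≠ D := by
    intro h
    have : γ = Real.pi / 2 := by rw [hγ, ← h, angle_self_right]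
    linarith
  have hAC : A ≠ C := by
    intro h
    have : γ = α := by rw [hγ, ← h, angle_comm, ← hα]
    linarith
  have hBD : B ≠ D := by
    intro h
    have hα' : α = 0 := by
      rw [hα, ← h, angle_self_of_ne hAB.symm]
    have hγ' : γ = 0 := by
      rw [hγ, ← h, angle_self_of_ne hBC]
    linarith
  have ha' : 0 < a := ha ▸ dist_pos.mpr hAB
  have hb' : 0 < b := hb ▸ dist_pos.mpr hBC
  have hc' : 0 < c := hc ▸ dist_pos.mpr hCD
  have hd' : 0 < d := hd ▸ dist_pos.mpr (Ne.symm hAD)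
  -- memberships
  have mA : A ∈ ({A, B, C, D} : Set (EuclideanSpace ℝ (Fin 2))) := by simp
  have mB : B ∈ ({A, B, C, D} : Set (EuclideanSpace ℝ (Fin 2))) := by simp
  have mC : C ∈ ({A, B, C, D} : Set (EuclideanSpace ℝ (Fin 2))) := by simp
  have mD : D ∈ ({A, B, C, D} : Set (EuclideanSpace ℝ (Fin 2))) := by simp
  -- non-collinearity
  have hnc1 : ¬Collinear ℝ ({A, C, B} : Set (EuclideanSpace ℝ (Fin 2))) :=
    affineIndependent_iff_not_collinear_set.mp
      (hcyc.affineIndependent_of_mem_of_ne mA mC mB hAC hAB hBC.symm)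
  have hnc2 : ¬Collinear ℝ ({B, D, C} : Set (EuclideanSpace ℝ (Fin 2))) :=
    affineIndependent_iff_not_collinear_set.mp
      (hcyc.affineIndependent_of_mem_of_ne mB mD mC hBD hBC (Ne.symm hCD))
  -- strict triangle inequalities
  have tri1 : dist A B < dist A C + dist C B := by
    rcases (dist_triangle A C B).lt_or_eq with h | h
    · exact h
    · exact absurd (dist_add_dist_eq_iff.mp h.symm).collinear hnc1
  have tri2 : dist B C < dist B D + dist D C := by
    rcases (dist_triangle B D C).lt_or_eq with h | h
    · exact h
    · exact absurd (dist_add_dist_eq_iff.mp h.symm).collinear hnc2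
  have w1 : dist A C ≤ dist A D + dist D C := dist_triangle A D C
  have w2 : dist B D ≤ dist B A + dist A D := dist_triangle B A D
  have ecb : dist C B = b := by rw [hb, dist_comm]
  have ead : dist A D = d := by rw [hd, dist_comm]
  have edc : dist D C = c := by rw [hc, dist_comm]
  have eba : dist B A = a := by rw [ha, dist_comm]
  have hq1 : 0 < b + c + d - a := by
    have := ha ▸ tri1
    rw [ecb] at this
    rw [ead, edc] at w1
    linarith
  have hq2 : 0 < a + c + d - b := by
    have := hb ▸ tri2
    rw [edc] at this
    rw [eba, ead] at w2
    linarith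
  -- law of cosines
  have hγval : γ = Real.pi - α := by linarith
  have hδval : δ = Real.pi - β := by linarith
  have hcγ : Real.cos γ = -Real.cos α := by rw [hγval]; exact Real.cos_pi_sub α
  have hcδ : Real.cos δ = -Real.cos β := by rw [hδval]; exact Real.cos_pi_sub β
  have lc1 := EuclideanGeometry.law_cos D A B
  have lc2 := EuclideanGeometry.law_cos B C D
  have lc3 := EuclideanGeometry.law_cos A B C
  have lc4 := EuclideanGeometry.law_cos C D A
  rw [← hα, ← hd, eba, dist_comm D B] at lc1
  rw [← hγ, hcγ, ← hb, edc] at lc2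
  rw [← hβ, ← ha, ecb] at lc3
  rw [← hδ, hcδ, ← hc, ead, dist_comm C A] at lc4
  have e1 : a * a + d * d - b * b - c * c = 2 * (a * d + b * c) * Real.cos α := by
    linear_combination lc2 - lc1
  have e2 : a * a + b * b - c * c - d * d = 2 * (a * b + c * d) * Real.cos β := by
    linear_combination lc4 - lc3
  -- positivity of the factors
  have hu0 : 0 ≤ Real.cos α := Real.cos_nonneg_of_mem_Icc ⟨by linarith, by linarith⟩
  have hD1 : 0 < a * d + b * c := add_pos (mul_pos ha' hd') (mul_pos hb' hc')
  have hN1 : 0 ≤ a * a + d * d - b * b - c * c := by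
    rw [e1]
    exact mul_nonneg (by linarith) hu0
  have hT1 : 0 < b * (a + b) + d * (c - d) :=
    add_pos_of_pos_of_nonneg (mul_pos hb' (by linarith))
      (mul_nonneg hd'.le (by linarith))
  have hT2 : 0 < a * (a + b) - c * (c - d) := by
    have hdd : d * d ≤ c * d := mul_le_mul_of_nonneg_right hcd hd'.le
    have hab : 0 < a * b := mul_pos ha' hb'
    have hbb : 0 < b * b := mul_pos hb' hb'
    have expand : a * (a + b) - c * (c - d) =
        (a * a + d * d - b * b - c * c) + (b * b + a * b) + (c * d - d * d) := by ring
    rw [expand]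
    linarith
  have key : (Real.cos β + 1 - 2 * Real.cos α ^ 2) *
      ((2 * (a * b + c * d)) * (2 * (a * d + b * c)) ^ 2) =
      4 * (b + c + d - a) * (a + c + d - b) * (b * (a + b) + d * (c - d)) *
        (a * (a + b) - c * (c - d)) := by
    linear_combination
      (2 * (2 * (a * b + c * d)) * ((2 * (a * d + b * c)) * Real.cos α +
        (a * a + d * d - b * b - c * c))) * e1 - (2 * (a * d + b * c)) ^ 2 * e2
  have hM : 0 < (2 * (a * b + c * d)) * (2 * (a * d + b * c)) ^ 2 := by
    have h1 : 0 < a * b + c * d := add_pos (mul_pos ha' hb') (mul_pos hc' hd')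
    have h2 : 0 < a * d + b * c := add_pos (mul_pos ha' hd') (mul_pos hb' hc')
    positivity
  have hR : 0 < 4 * (b + c + d - a) * (a + c + d - b) * (b * (a + b) + d * (c - d)) *
      (a * (a + b) - c * (c - d)) := by positivity
  have h0 : 0 < (Real.cos β + 1 - 2 * Real.cos α ^ 2) *
      ((2 * (a * b + c * d)) * (2 * (a * d + b * c)) ^ 2) := by rw [key]; exact hR
  have hvpos : 0 < Real.cos β + 1 - 2 * Real.cos α ^ 2 :=
    lt_of_mul_lt_mul_right (by simpa using h0) hM.le
  have hcos2 : Real.cos (2 * α) < Real.cos β := by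
    rw [Real.cos_two_mul]; linarith
  by_contra hcon
  push_neg at hcon
  have : Real.cos β ≤ Real.cos (2 * α) :=
    Real.cos_le_cos_of_nonneg_of_le_pi (by linarith) hβπ hcon
  linarith
end

section
/- Suppose nonnegative integers k, q, p, r, s satisfy (k - q)*sqrt(3)*d - (k - q) = p*d + p*sqrt(3) + 2*r + 2*s*d with k > q and max(p, s) > 0, where d > 0. Then d = x + y*sqrt 3 for some positive rationals x and y. -/
theorem stmt_16 (k q p r s : ℕ) (d : ℝ) (hd : 0 < d)
    (hkq : q < k) (hps : 0 < max p s)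
    (heq : ((k : ℝ) - (q : ℝ)) * Real.sqrt 3 * d - ((k : ℝ) - (q : ℝ)) =
      (p : ℝ) * d + (p : ℝ) * Real.sqrt 3 + 2 * (r : ℝ) + 2 * (s : ℝ) * d) :
    ∃ x y : ℚ, 0 < x ∧ 0 < y ∧ d = (x : ℝ) + (y : ℝ) * Real.sqrt 3 := by
  set t := Real.sqrt 3 with ht
  have ht2 : t ^ 2 = 3 := Real.sq_sqrt (by norm_num)
  have htpos : 0 < t := Real.sqrt_pos.mpr (by norm_num)
  set m : ℝ := (k : ℝ) - (q : ℝ) with hm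
  have hmpos : 0 < m := by
    have : (q : ℝ) < (k : ℝ) := by exact_mod_cast hkq
    linarith
  -- key multiplied identity
  have key : (3 * m ^ 2 - ((p : ℝ) + 2 * s) ^ 2) * d =
      (3 * m * p + ((p : ℝ) + 2 * s) * (m + 2 * r)) +
      (m * (m + 2 * r) + ((p : ℝ) + 2 * s) * p) * t := by
    linear_combination (m * t + ((p : ℝ) + 2 * s)) * heq + (-(m ^ 2 * d - m * (p:ℝ))) * ht2
  have hBpos : 0 < 3 * m * (p : ℝ) + ((p : ℝ) + 2 * s) * (m + 2 * r) := by
    rcases Nat.lt_or_ge 0 p with hp | hp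
    · have : (0 : ℝ) < p := by exact_mod_cast hp
      have hr : (0 : ℝ) ≤ r := Nat.cast_nonneg r
      have hs : (0 : ℝ) ≤ s := Nat.cast_nonneg s
      nlinarith
    · have hp0 : p = 0 := Nat.le_zero.mp hp
      have hs : 0 < s := by simpa [hp0] using hps
      have hsR : (0 : ℝ) < s := by exact_mod_cast hs
      have hr : (0 : ℝ) ≤ r := Nat.cast_nonneg r
      nlinarith
  have hCpos : 0 < m * (m + 2 * (r : ℝ)) + ((p : ℝ) + 2 * s) * p := by
    have hr : (0 : ℝ) ≤ r := Nat.cast_nonneg r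
    have hs : (0 : ℝ) ≤ s := Nat.cast_nonneg s
    have hp : (0 : ℝ) ≤ p := Nat.cast_nonneg p
    nlinarith
  have hApos : 0 < 3 * m ^ 2 - ((p : ℝ) + 2 * s) ^ 2 := by
    by_contra h
    push_neg at h
    nlinarith
  -- rational versions
  set AQ : ℚ := 3 * ((k : ℚ) - q) ^ 2 - ((p : ℚ) + 2 * s) ^ 2 with hAQ
  set BQ : ℚ := 3 * ((k : ℚ) - q) * p + ((p : ℚ) + 2 * s) * (((k : ℚ) - q) + 2 * r) with hBQ
  set CQ : ℚ := ((k : ℚ) - q) * (((k : ℚ) - q) + 2 * r) + ((p : ℚ) + 2 * s) * p with hCQ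
  have hAQ' : ((AQ : ℝ)) = 3 * m ^ 2 - ((p : ℝ) + 2 * s) ^ 2 := by push_cast [hAQ, hm]; ring
  have hBQ' : ((BQ : ℝ)) = 3 * m * p + ((p : ℝ) + 2 * s) * (m + 2 * r) := by
    push_cast [hBQ, hm]; ring
  have hCQ' : ((CQ : ℝ)) = m * (m + 2 * (r : ℝ)) + ((p : ℝ) + 2 * s) * p := by
    push_cast [hCQ, hm]; ring
  have hAQpos : 0 < AQ := by
    have : (0 : ℝ) < (AQ : ℝ) := hAQ' ▸ hApos
    exact_mod_cast this
  have hBQpos : 0 < BQ := by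
    have : (0 : ℝ) < (BQ : ℝ) := hBQ' ▸ hBpos
    exact_mod_cast this
  have hCQpos : 0 < CQ := by
    have : (0 : ℝ) < (CQ : ℝ) := hCQ' ▸ hCpos
    exact_mod_cast this
  refine ⟨BQ / AQ, CQ / AQ, div_pos hBQpos hAQpos, div_pos hCQpos hAQpos, ?_⟩
  have hAne : ((AQ : ℝ)) ≠ 0 := by positivity
  have keyQ : (AQ : ℝ) * d = (BQ : ℝ) + (CQ : ℝ) * t := by
    rw [hAQ', hBQ', hCQ']; exact key
  push_cast
  field_simp
  linear_combination keyQ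
end
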